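/- arXiv:2412.21118 — 3 statements merged into one kernel-verified Lean document; each statement's English description precedes it below -/
import Mathlib

section
/- In the reduced OSD system [I_{n-k} | A] with flip vectors g_j = [A_j^T | u_j], checking whether g_j (mapped back through the column permutations) lies in the stabilizer space S is equivalent to checking L'' g_j^T = 0 for a fixed 2k × 2n matrix L'' (the permuted logical-symplectic matrix), and each such check costs O((n-k)·k) field operations since A_j has length n-k and u_j has a single nonzero entry. -/
open Matrix

/-- The flip vector g_j = [A_j^T | u_j]. -/
def flipVec {r c : ℕ} (A : Matrix (Fin r) (Fin c) (ZMod 2)) (j : Fin c) :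
    Fin r ⊕ Fin c → ZMod 2 :=
  Sum.elim (fun i => A i j) (Pi.single j 1)

/-- Checking whether a flip vector is a stabilizer amounts to checking L'' g_j^T = 0,
and L'' g_j^T equals (the first-block submatrix of L'') times A_j plus the
(n-k+j)-th column of L''. -/
theorem stmt_10 (n k : ℕ) (A : Matrix (Fin (n - k)) (Fin (n + k)) (ZMod 2))
    (L'' : Matrix (Fin (2 * k)) (Fin (n - k) ⊕ Fin (n + k)) (ZMod 2))
    (S : Set (Fin (n - k) ⊕ Fin (n + k) → ZMod 2))
    (hS : S = {x | (Matrix.fromCols (1 : Matrix (Fin (n - k)) (Fin (n - k)) (ZMod 2)) A)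
                      *ᵥ x = 0 ∧ L'' *ᵥ x = 0})
    (j : Fin (n + k)) :
    (flipVec A j ∈ S ↔ L'' *ᵥ flipVec A j = 0) ∧
    L'' *ᵥ flipVec A j
      = (fun r => (∑ i, L'' r (Sum.inl i) * A i j) + L'' r (Sum.inr j)) := by
  have hker : (Matrix.fromCols (1 : Matrix (Fin (n - k)) (Fin (n - k)) (ZMod 2)) A)
      *ᵥ flipVec A j = 0 := by
    funext i
    simp only [mulVec, dotProduct, Fintype.sum_sum_type, fromCols_apply_inl,
      fromCols_apply_inr, flipVec, Sum.elim_inl, Sum.elim_inr]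
    rw [Finset.sum_eq_single i (by intro b _ hb; simp [Matrix.one_apply, hb.symm])
      (by simp), Finset.sum_eq_single j (by intro b _ hb; simp [Pi.single_eq_of_ne hb])
      (by simp)]
    simp [CharTwo.add_self_eq_zero]
  constructor
  · rw [hS]
    exact ⟨fun h => h.2, fun h => ⟨hker, h⟩⟩
  · funext r
    simp only [mulVec, dotProduct, Fintype.sum_sum_type, flipVec, Sum.elim_inl, Sum.elim_inr]
    congr 1
    rw [Finset.sum_eq_single j (by intro b _ hb; simp [Pi.single_eq_of_ne hb]) (by simp)]
    simp
end

section
/- Suppose every flip vector g_j = [A_j^T | u_j], j = 1,…,n+k, corresponds to a stabilizer (i.e., lies in the stabilizer space S after inverting the permutations). Then every valid error candidate produced by order-w OSD, for any w, lies in the same stabilizer coset as the OSD-0 output; hence under degenerate (coset-based) decoding, OSD-w is equivalent to OSD-0. -/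
open Matrix

/-- If every flip vector lies in the stabilizer space S, then every order-w OSD candidate
(obtained from the OSD-0 output e₀ by adding at most w flip vectors) lies in the same
stabilizer coset as e₀; hence OSD-w is equivalent to OSD-0 under degenerate decoding. -/
theorem stmt_11 (n k : ℕ) (A : Matrix (Fin (n - k)) (Fin (n + k)) (ZMod 2))
    (S : Submodule (ZMod 2) (Fin (n - k) ⊕ Fin (n + k) → ZMod 2))
    (hg : ∀ j, flipVec A j ∈ S)
    (e₀ : Fin (n - k) ⊕ Fin (n + k) → ZMod 2) :
    ∀ (w : ℕ) (J : Finset (Fin (n + k))), J.card ≤ w →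
      (Submodule.Quotient.mk (e₀ + ∑ j ∈ J, flipVec A j) :
          (Fin (n - k) ⊕ Fin (n + k) → ZMod 2) ⧸ S)
        = Submodule.Quotient.mk e₀ := by
  intro w J _
  have hsum : ∑ j ∈ J, flipVec A j ∈ S := S.sum_mem fun j _ => hg j
  rw [Submodule.Quotient.mk_add, (Submodule.Quotient.mk_eq_zero S).2 hsum, add_zero]
end

section
/- If a reduced check matrix in reduced row echelon form [I | Ã] has all columns of Ã of Hamming weight less than d-1, and the code has minimum distance d, then every flip vector of the reduced system is a stabilizer, and therefore order-w OSD on the reduced system is equivalent to OSD-0 for every w ≥ 0. -/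
open Matrix

/-- If all columns of Ã in the reduced row echelon form [I | Ã] have Hamming weight
less than d-1 (d the minimum distance, i.e., every nonzero element of the kernel of
[I | Ã] with symplectic weight < d is a stabilizer), then every flip vector is a
stabilizer, and order-w OSD on the reduced system is equivalent to OSD-0 for all w. -/
theorem stmt_14 (r c d : ℕ)
    (A : Matrix (Fin r) (Fin c) (ZMod 2))
    (S : Submodule (ZMod 2) (Fin r ⊕ Fin c → ZMod 2))
    (sympWt : (Fin r ⊕ Fin c → ZMod 2) → ℕ)
    (hle : ∀ x, sympWt x ≤ (Finset.univ.filter fun i => x i ≠ 0).card)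
    (hcode : ∀ x : Fin r ⊕ Fin c → ZMod 2,
      (Matrix.fromCols (1 : Matrix (Fin r) (Fin r) (ZMod 2)) A) *ᵥ x = 0 →
        x ≠ 0 → x ∉ S → d ≤ sympWt x)
    (hcols : ∀ j : Fin c, (Finset.univ.filter fun i => A i j ≠ 0).card < d - 1) :
    (∀ j, flipVec A j ∈ S) ∧
    ∀ (e₀ : Fin r ⊕ Fin c → ZMod 2) (w : ℕ) (J : Finset (Fin c)), J.card ≤ w →
      (Submodule.Quotient.mk (e₀ + ∑ j ∈ J, flipVec A j) :
          (Fin r ⊕ Fin c → ZMod 2) ⧸ S)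
        = Submodule.Quotient.mk e₀ := by
  have hmem : ∀ j, flipVec A j ∈ S := by
    intro j
    by_contra hnot
    -- kernel condition
    have hker : (Matrix.fromCols (1 : Matrix (Fin r) (Fin r) (ZMod 2)) A) *ᵥ
        flipVec A j = 0 := by
      rw [flipVec, Matrix.fromCols_mulVec_sumElim, Matrix.one_mulVec,
        Matrix.mulVec_single]
      funext i
      simp [CharTwo.add_self_eq_zero]
    -- nonzero
    have hne : flipVec A j ≠ 0 := by
      intro h
      have := congrFun h (Sum.inr j)
      simp [flipVec] at this
    -- weight bound
    have hcard : (Finset.univ.filter fun i => flipVec A j i ≠ 0).card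
        = (Finset.univ.filter fun i => A i j ≠ 0).card + 1 := by
      have h := Finset.card_toLeft_add_card_toRight (u :=
        Finset.univ.filter fun i => flipVec A j i ≠ 0)
      have hL : (Finset.univ.filter fun i => flipVec A j i ≠ 0).toLeft
          = Finset.univ.filter fun i => A i j ≠ 0 := by
        ext x; simp [Finset.mem_toLeft]; simp [flipVec]
      have hR : (Finset.univ.filter fun i => flipVec A j i ≠ 0).toRight
          = {j} := by
        ext x; simp [Finset.mem_toRight]; simp [flipVec, Pi.single_apply]
      rw [hL, hR] at h
      simp only [Finset.card_singleton] at h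
      omega
    have hd := hcode _ hker hne hnot
    have h1 := hle (flipVec A j)
    have h2 := hcols j
    omega
  refine ⟨hmem, fun e₀ w J _ => ?_⟩
  rw [Submodule.Quotient.eq]
  have : (∑ j ∈ J, flipVec A j) ∈ S := Submodule.sum_mem S fun j _ => hmem j
  simpa using this
end
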